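/- For every t, a, s, ε, n ∈ ℕ with t ≥ 1, n ≥ 1 and ε ≥ 1, one has F_t(a, s, ε, n) + F_{t−1}(a, s, ε, n−1) = F_t(a, s, ε−1, n). -/

import Mathlib

open Finset

noncomputable section

/-- Binomial coefficient `C(a,k)` with integer arguments; zero if `k < 0` or `a < k`. -/
def Cb (a k : ℤ) : ℤ := if 0 ≤ k ∧ k ≤ a then (Nat.choose a.toNat k.toNat : ℤ) else 0

/-- The recursively defined function `F_t(a, s, ε, n)`. -/
def Fb : ℕ → ℤ → ℕ → ℕ → ℤ → ℤ
  | 0, a, _, _, n => Cb a n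
  | (t+1), a, s, e, n =>
      if n < 0 then 0 else
      Cb a n
        + ∑ j ∈ Finset.range (t+1), Cb ((s : ℤ) - n - 4 + (j+1)) (j+1) * Cb (a + (j+1)) n
        - ∑ j ∈ Finset.range (t+1), Cb (e : ℤ) (j+1) * Fb (t - j) a s e (n - (j+1))
  termination_by t _ _ _ _ => t
  decreasing_by omega

/-!
Only the last sum in the definition of `F_t` depends on `ε`. Put
`g i = C(ε-1, i) F_{t-1-i}(ε, n-1-i)`. By Pascal's rule `C(ε, i) = C(ε-1, i-1) + C(ε-1, i)` and
induction on `t`, the `i`-th term of that sum for `ε` minus the one for `ε - 1` is `g (i-1) - g i`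
when `i < t`, and `g (t-1)` when `i = t` since `F_0` does not depend on `ε`. So the difference of
the sums telescopes to `g 0 = F_{t-1}(ε, n-1)`.
-/

lemma Cb_of_neg {a k : ℤ} (hk : k < 0) : Cb a k = 0 :=
  if_neg (by omega)

lemma Cb_natCast (m k : ℕ) : Cb m k = m.choose k := by
  unfold Cb
  split_ifs with h
  · simp
  · rw [Nat.choose_eq_zero_of_lt (by omega), Nat.cast_zero]

lemma Cb_succ_succ (m k : ℕ) :
    Cb ((m : ℤ) + 1) ((k : ℤ) + 1) = Cb m k + Cb m ((k : ℤ) + 1) := by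
  have h := Cb_natCast (m + 1) (k + 1)
  push_cast at h
  rw [h, Nat.choose_succ_succ', Cb_natCast, ← Nat.cast_succ, Cb_natCast, Nat.cast_add]

section

variable {t : ℕ} {a : ℤ} {s e : ℕ} {n : ℤ}

lemma Fb_of_neg (hn : n < 0) : Fb t a s e n = 0 := by
  cases t with
  | zero => rw [Fb.eq_1, Cb_of_neg hn]
  | succ t => rw [Fb.eq_2, if_pos hn]

lemma Fb_succ_of_nonneg (hn : 0 ≤ n) :
    Fb (t + 1) a s e n = Cb a n
      + ∑ j ∈ range (t + 1), Cb ((s : ℤ) - n - 4 + (j + 1)) (j + 1) * Cb (a + (j + 1)) n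
      - ∑ j ∈ range (t + 1), Cb (e : ℤ) (j + 1) * Fb (t - j) a s e (n - (j + 1)) := by
  rw [Fb.eq_2, if_neg (not_lt.2 hn)]

end

theorem Fb_succ_add_Fb_sub_one (t : ℕ) (a : ℤ) (s e : ℕ) (n : ℤ) :
    Fb (t + 1) a s (e + 1) n + Fb t a s (e + 1) (n - 1) = Fb (t + 1) a s e n := by
  induction t using Nat.strong_induction_on generalizing n with
  | _ t ih =>
  rcases lt_or_ge n 0 with hn | hn
  · rw [Fb_of_neg hn, Fb_of_neg (by omega), Fb_of_neg hn, add_zero]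
  set g : ℕ → ℤ := fun j => Cb e j * Fb (t - j) a s (e + 1) (n - 1 - j)
  have hstep : ∀ j < t,
      Cb ((e + 1 : ℕ) : ℤ) (j + 1) * Fb (t - j) a s (e + 1) (n - (j + 1))
        - Cb (e : ℤ) (j + 1) * Fb (t - j) a s e (n - (j + 1)) = g j - g (j + 1) := by
    intro j hj
    obtain ⟨r, hr⟩ : ∃ r, t - j = r + 1 := ⟨t - j - 1, by omega⟩
    have hrec := ih r (by omega) (n - (j + 1))
    simp only [g, hr, ← hrec, show t - (j + 1) = r by omega, Nat.cast_add, Nat.cast_one,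
      Cb_succ_succ]
    ring_nf
  have hlast : Cb ((e + 1 : ℕ) : ℤ) (t + 1) * Fb (t - t) a s (e + 1) (n - (t + 1))
      - Cb (e : ℤ) (t + 1) * Fb (t - t) a s e (n - (t + 1)) = g t := by
    simp only [g, Nat.sub_self, Fb.eq_1, Nat.cast_add, Nat.cast_one, Cb_succ_succ]
    ring_nf
  have hsum : ∑ j ∈ range (t + 1),
      (Cb ((e + 1 : ℕ) : ℤ) (j + 1) * Fb (t - j) a s (e + 1) (n - (j + 1))
        - Cb (e : ℤ) (j + 1) * Fb (t - j) a s e (n - (j + 1))) = Fb t a s (e + 1) (n - 1) := by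
    rw [sum_range_succ, sum_congr rfl fun j hj => hstep j (mem_range.1 hj), sum_range_sub', hlast,
      sub_add_cancel]
    simp [g, Cb_natCast]
  rw [Fb_succ_of_nonneg hn, Fb_succ_of_nonneg hn, ← hsum, sum_sub_distrib]
  ring

theorem stmt_17_general (t a s ε n : ℕ) (ht : 1 ≤ t) (hε : 1 ≤ ε) :
    Fb t (a : ℤ) s ε (n : ℤ) + Fb (t - 1) (a : ℤ) s ε ((n : ℤ) - 1) =
      Fb t (a : ℤ) s (ε - 1) (n : ℤ) := by
  obtain ⟨t, rfl⟩ : ∃ r, t = r + 1 := ⟨t - 1, by omega⟩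
  obtain ⟨e, rfl⟩ : ∃ e, ε = e + 1 := ⟨ε - 1, by omega⟩
  exact Fb_succ_add_Fb_sub_one t a s e n

/-- **Property 4.** `F_t(a,s,ε,n) + F_{t−1}(a,s,ε,n−1) = F_t(a,s,ε−1,n)`
for `t ≥ 1`, `n ≥ 1` and `ε ≥ 1`. -/
theorem stmt_17 (t a s ε n : ℕ) (ht : 1 ≤ t) (hn : 1 ≤ n) (hε : 1 ≤ ε) :
    Fb t (a : ℤ) s ε (n : ℤ) + Fb (t - 1) (a : ℤ) s ε ((n : ℤ) - 1) =
      Fb t (a : ℤ) s (ε - 1) (n : ℤ) :=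
  stmt_17_general t a s ε n ht hε

end
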